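/- Let ρ = l → r be a linear term rewrite rule and let m : l° ↣ G be a match morphism establishing a PBPO+ rewrite step via the rule encoding ρ° on a finite Σ°-labeled graph G. Then m maps every symbol vertex of l° (i.e., every vertex labeled with a symbol from Σ) to a good vertex of G. -/

import Mathlib

open CategoryTheory
open Classical

noncomputable section

/-- Labeled graphs over a label type `W`. -/
structure LGraph (W : Type) : Type 1 where
  V : Type
  E : Type
  src : E → V
  tgt : E → V
  lV : V → W
  lE : E → W

section Cat

variable {W : Type} [Preorder W]

/-- Label-nondecreasing graph premorphisms: the morphisms of the category `Graph^(L,≤)`. -/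
structure GLHom (G H : LGraph W) : Type where
  onV : G.V → H.V
  onE : G.E → H.E
  src_comm : ∀ e, H.src (onE e) = onV (G.src e)
  tgt_comm : ∀ e, H.tgt (onE e) = onV (G.tgt e)
  lV_le : ∀ v, G.lV v ≤ H.lV (onV v)
  lE_le : ∀ e, G.lE e ≤ H.lE (onE e)

theorem GLHom.ext' {G H : LGraph W} {f g : GLHom G H}
    (h1 : f.onV = g.onV) (h2 : f.onE = g.onE) : f = g := by
  cases f; cases g
  cases h1; cases h2
  rfl

/-- The category `Graph^(L,≤)` of labeled graphs over a preordered label set. -/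
instance : Category (LGraph W) where
  Hom G H := GLHom G H
  id G := { onV := id, onE := id, src_comm := fun _ => rfl, tgt_comm := fun _ => rfl,
            lV_le := fun _ => le_refl _, lE_le := fun _ => le_refl _ }
  comp f g :=
    { onV := g.onV ∘ f.onV
      onE := g.onE ∘ f.onE
      src_comm := fun e => by
        simp only [Function.comp_apply, g.src_comm, f.src_comm]
      tgt_comm := fun e => by
        simp only [Function.comp_apply, g.tgt_comm, f.tgt_comm]
      lV_le := fun v => le_trans (f.lV_le v) (g.lV_le _)
      lE_le := fun e => le_trans (f.lE_le e) (g.lE_le _) }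
  id_comp f := GLHom.ext' rfl rfl
  comp_id f := GLHom.ext' rfl rfl
  assoc f g h := GLHom.ext' rfl rfl

/-- Vertex map of a morphism. -/
abbrev homV {G H : LGraph W} (f : G ⟶ H) : G.V → H.V := GLHom.onV f

/-- Edge map of a morphism. -/
abbrev homE {G H : LGraph W} (f : G ⟶ H) : G.E → H.E := GLHom.onE f

end Cat

/-- A graph is finite if it has finitely many vertices and edges. -/
def FiniteG {W : Type} (G : LGraph W) : Prop := Finite G.V ∧ Finite G.E
/-- The flat lattice on a base label set `A`: a global minimum `⊥`, a global
maximum `⊤`, and all elements of `A` pairwise incomparable. -/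
inductive Flat (A : Type) : Type
  | bot : Flat A
  | el : A → Flat A
  | top : Flat A

namespace Flat

def le {A : Type} : Flat A → Flat A → Prop
  | bot, _ => True
  | _, top => True
  | el a, el b => a = b
  | _, _ => False

instance (A : Type) : Preorder (Flat A) where
  le := Flat.le
  le_refl a := by cases a <;> trivial
  le_trans a b c hab hbc := by
    cases a <;> cases b <;> cases c <;> simp_all [Flat.le]

theorem bot_le {A : Type} (a : Flat A) : (Flat.bot : Flat A) ≤ a := by
  show Flat.le Flat.bot a
  cases a <;> trivial

theorem le_top {A : Type} (a : Flat A) : a ≤ (Flat.top : Flat A) := by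
  show Flat.le a Flat.top
  cases a <;> trivial

theorem le_cases {A : Type} {a b : Flat A} (h : a = Flat.bot ∨ b = Flat.top) : a ≤ b := by
  rcases h with h | h
  · subst h; exact bot_le _
  · subst h; exact le_top _

end Flat

/-- The flat lattice `Σ°` induced by a signature `S` together with the
positive natural numbers (used as edge labels). -/
abbrev FlatL (S : Type) := Flat (S ⊕ ℕ+)
/-- First-order terms over a signature `S` with arity function `ar` and
variable set `X`. -/
inductive Term (S : Type) (ar : S → ℕ) (X : Type) : Type
  | var : X → Term S ar X
  | app : (f : S) → (Fin (ar f) → Term S ar X) → Term S ar X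

namespace Term

variable {S : Type} {ar : S → ℕ} {X : Type}

/-- The subterm of `t` at a position (a list of (0-based) child indices),
if the position exists in `t`. -/
def sub? : Term S ar X → List ℕ → Option (Term S ar X)
  | t, [] => some t
  | .var _, _ :: _ => none
  | .app f ts, i :: p => if h : i < ar f then sub? (ts ⟨i, h⟩) p else none

/-- The set of variables occurring in a term. -/
def vars (t : Term S ar X) : Set X := {x | ∃ p, t.sub? p = some (.var x)}

/-- A term is linear if every variable occurs at most once in it. -/
def Linear (t : Term S ar X) : Prop :=
  ∀ x p q, t.sub? p = some (.var x) → t.sub? q = some (.var x) → p = q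

/-- The head symbol of a term, if any. -/
def head? : Term S ar X → Option S
  | .var _ => none
  | .app f _ => some f

/-- The function symbol at position `p` of `t`, if any. -/
def symAt (t : Term S ar X) (p : List ℕ) : Option S := (t.sub? p).bind head?

theorem sub?_append (t : Term S ar X) (p q : List ℕ) :
    t.sub? (p ++ q) = (t.sub? p).bind (fun s => s.sub? q) := by
  induction p generalizing t with
  | nil => simp [sub?]
  | cons i p ih =>
    cases t with
    | var x => simp [sub?]
    | app f ts =>
      show sub? (.app f ts) (i :: (p ++ q)) = _
      simp only [sub?]
      by_cases h : i < ar f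
      · simp [h, ih]
      · simp [h]

theorem symAt_sub (t : Term S ar X) {p : List ℕ} {f : S} (h : t.symAt p = some f) :
    ∃ ts : Fin (ar f) → Term S ar X, t.sub? p = some (.app f ts) := by
  unfold symAt at h
  cases hs : t.sub? p with
  | none => rw [hs] at h; simp at h
  | some s =>
    rw [hs] at h
    cases s with
    | var x => simp [head?] at h
    | app g ts =>
      simp [head?] at h
      subst h
      exact ⟨ts, rfl⟩

theorem edge_sub?_isSome (t : Term S ar X) {p : List ℕ} {i : ℕ}
    (h : ∃ f, t.symAt p = some f ∧ i < ar f) :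
    ∃ s, t.sub? (p ++ [i]) = some s := by
  obtain ⟨f, hf, hi⟩ := h
  obtain ⟨ts, hts⟩ := t.symAt_sub hf
  refine ⟨ts ⟨i, hi⟩, ?_⟩
  rw [sub?_append, hts]
  simp [sub?, hi]

theorem edge_tgt_var (t : Term S ar X) {p : List ℕ} {i : ℕ}
    (h : ∃ f, t.symAt p = some f ∧ i < ar f)
    (hn : ¬ (t.symAt (p ++ [i])).isSome) :
    ∃ x, t.sub? (p ++ [i]) = some (.var x) := by
  obtain ⟨s, hs⟩ := t.edge_sub?_isSome h
  cases s with
  | var x => exact ⟨x, hs⟩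
  | app g ts => exact absurd (by simp [symAt, hs, head?]) hn

theorem root_var (t : Term S ar X) (h : ¬ (t.symAt []).isSome) :
    ∃ x, t.sub? [] = some (.var x) := by
  cases t with
  | var x => exact ⟨x, rfl⟩
  | app f ts => exact absurd (by simp [symAt, sub?, head?]) h

/-- Vertices of the term encoding: symbol vertices (named by their position)
and variable heads (named by their variable). -/
def encV (t : Term S ar X) : Type :=
  {p : List ℕ // (t.symAt p).isSome} ⊕ {x : X // x ∈ t.vars}

/-- Edges of the term encoding: pairs of a symbol position and a child index. -/
def encE (t : Term S ar X) : Type :=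
  {pi : List ℕ × ℕ // ∃ f, t.symAt pi.1 = some f ∧ pi.2 < ar f}

/-- Target of an edge of the term encoding. -/
noncomputable def encTgt (t : Term S ar X) (e : t.encE) : t.encV :=
  if h : (t.symAt (e.1.1 ++ [e.1.2])).isSome then Sum.inl ⟨e.1.1 ++ [e.1.2], h⟩
  else Sum.inr ⟨Classical.choose (t.edge_tgt_var e.2 h),
    ⟨e.1.1 ++ [e.1.2], Classical.choose_spec (t.edge_tgt_var e.2 h)⟩⟩

/-- The term encoding `t°` of a term `t` as a `Σ°`-labeled graph. -/
noncomputable def enc (t : Term S ar X) : LGraph (FlatL S) where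
  V := t.encV
  E := t.encE
  src e := Sum.inl ⟨e.1.1, by obtain ⟨f, hf, _⟩ := e.2; simp [hf]⟩
  tgt := t.encTgt
  lV v := match v with
    | .inl q => (t.symAt q.1).elim Flat.bot (fun f => Flat.el (Sum.inl f))
    | .inr _ => Flat.bot
  lE e := Flat.el (Sum.inr ⟨e.1.2 + 1, Nat.succ_pos _⟩)

/-- The root of the term encoding (the vertex at position `ε`). -/
noncomputable def encRoot (t : Term S ar X) : t.encV :=
  if h : (t.symAt []).isSome then Sum.inl ⟨[], h⟩
  else Sum.inr ⟨Classical.choose (t.root_var h), ⟨[], Classical.choose_spec (t.root_var h)⟩⟩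

/-- `t.encVertAt p v` says that `v` is the vertex at position `p` in the term
encoding `t°`. -/
def encVertAt (t : Term S ar X) (p : List ℕ) : t.encV → Prop
  | .inl q => q.1 = p
  | .inr x => t.sub? p = some (.var x.1)

/-- The set of variable heads of a term encoding. -/
def varHeads (t : Term S ar X) : Set t.encV := Set.range Sum.inr

/-- Applying a substitution to a term. -/
def subst (σ : X → Term S ar X) : Term S ar X → Term S ar X
  | .var x => σ x
  | .app f ts => .app f (fun i => subst σ (ts i))

end Term

/-- One-hole contexts over a signature. `app f i ts C` is the context
`f(ts 0, …, C, …, ts (n-1))` with `C` at argument position `i`. -/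
inductive Ctx (S : Type) (ar : S → ℕ) (X : Type) : Type
  | hole : Ctx S ar X
  | app : (f : S) → (i : Fin (ar f)) → (Fin (ar f) → Term S ar X) → Ctx S ar X → Ctx S ar X

namespace Ctx

variable {S : Type} {ar : S → ℕ} {X : Type}

/-- Replacing the hole of a context by a term. -/
def fill : Ctx S ar X → Term S ar X → Term S ar X
  | .hole, t => t
  | .app f i ts C, t => .app f (Function.update ts i (C.fill t))

/-- The position of the hole of a context. -/
def holePos : Ctx S ar X → List ℕ
  | .hole => []
  | .app _ i _ C => (i : ℕ) :: C.holePos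

end Ctx

/-- A term rewrite rule `lhs → rhs`: `lhs` is not a variable and all variables
of `rhs` occur in `lhs`. -/
structure TRSRule (S : Type) (ar : S → ℕ) (X : Type) : Type where
  lhs : Term S ar X
  rhs : Term S ar X
  lhs_not_var : ∀ x, lhs ≠ Term.var x
  var_cond : rhs.vars ⊆ lhs.vars

namespace TRSRule

variable {S : Type} {ar : S → ℕ} {X : Type}

/-- A rule is linear if both sides are linear terms. -/
def Linear (ρ : TRSRule S ar X) : Prop := ρ.lhs.Linear ∧ ρ.rhs.Linear

/-- The rewrite step relation generated by a single rule. -/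
def Step (ρ : TRSRule S ar X) (s t : Term S ar X) : Prop :=
  ∃ (C : Ctx S ar X) (σ : X → Term S ar X),
    s = C.fill (ρ.lhs.subst σ) ∧ t = C.fill (ρ.rhs.subst σ)

/-- The rewrite step relation of a rule at a fixed position `p`. -/
def StepAt (ρ : TRSRule S ar X) (p : List ℕ) (s t : Term S ar X) : Prop :=
  ∃ (C : Ctx S ar X) (σ : X → Term S ar X),
    C.holePos = p ∧ s = C.fill (ρ.lhs.subst σ) ∧ t = C.fill (ρ.rhs.subst σ)

end TRSRule

/-- The rewrite relation of a term rewriting system. -/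
def TStep {S : Type} {ar : S → ℕ} {X : Type} (Rs : Set (TRSRule S ar X))
    (s t : Term S ar X) : Prop :=
  ∃ ρ ∈ Rs, ρ.Step s t
section Closures

variable {A : Type}

/-- Upper context closure `C[G]` of a graph rooted at `r`: adds a `⊤`-labeled
context vertex with a `⊤`-labeled edge to the root and a `⊤`-labeled loop. -/
def upperCC (G : LGraph (Flat A)) (r : G.V) : LGraph (Flat A) where
  V := G.V ⊕ Unit
  E := G.E ⊕ Bool
  src e := match e with
    | .inl e => .inl (G.src e)
    | .inr _ => .inr ()
  tgt e := match e with
    | .inl e => .inl (G.tgt e)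
    | .inr true => .inl r
    | .inr false => .inr ()
  lV v := match v with
    | .inl v => G.lV v
    | .inr _ => Flat.top
  lE e := match e with
    | .inl e => G.lE e
    | .inr _ => Flat.top

/-- Lower context closure `G↓_Xs`: relabels every vertex in `Xs` to `⊤` and
adds for it a fresh `⊤`-labeled vertex `x'` with a `⊤`-labeled edge `x → x'`
and a `⊤`-labeled loop on `x'`. -/
noncomputable def lowerCC (G : LGraph (Flat A)) (Xs : Set G.V) : LGraph (Flat A) where
  V := G.V ⊕ Xs
  E := G.E ⊕ (Xs ⊕ Xs)
  src e := match e with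
    | .inl e => .inl (G.src e)
    | .inr (.inl x) => .inl x.1
    | .inr (.inr x) => .inr x
  tgt e := match e with
    | .inl e => .inl (G.tgt e)
    | .inr (.inl x) => .inr x
    | .inr (.inr x) => .inr x
  lV v := match v with
    | .inl v => if v ∈ Xs then Flat.top else G.lV v
    | .inr _ => Flat.top
  lE e := match e with
    | .inl e => G.lE e
    | .inr _ => Flat.top

/-- The context closure `C[G↓_Xs]` of a rooted graph. -/
noncomputable def ctxCC (G : LGraph (Flat A)) (r : G.V) (Xs : Set G.V) : LGraph (Flat A) :=
  upperCC (lowerCC G Xs) (Sum.inl r)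

theorem ctxCC_lV_inl (G : LGraph (Flat A)) (r : G.V) (Xs : Set G.V) (v : G.V) :
    (ctxCC G r Xs).lV (Sum.inl (Sum.inl v)) = if v ∈ Xs then Flat.top else G.lV v := rfl

/-- The typing morphism `G ↣ C[G↓_Xs]` (an inclusion). -/
noncomputable def tCC (G : LGraph (Flat A)) (r : G.V) (Xs : Set G.V) :
    GLHom G (ctxCC G r Xs) where
  onV v := Sum.inl (Sum.inl v)
  onE e := Sum.inl (Sum.inl e)
  src_comm e := rfl
  tgt_comm e := rfl
  lV_le v := by
    rw [ctxCC_lV_inl]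
    split
    · exact Flat.le_top _
    · exact le_refl _
  lE_le e := le_refl _

end Closures

/-- The interface graph `I(t)` of a term `t`: a discrete graph with
`⊥`-labeled vertices `Var(t) ∪ {ε}`. -/
def interfaceG {S : Type} {ar : S → ℕ} {X : Type} (t : Term S ar X) : LGraph (FlatL S) where
  V := {x : X // x ∈ t.vars} ⊕ Unit
  E := Empty
  src e := e.elim
  tgt e := e.elim
  lV _ := Flat.bot
  lE e := e.elim

/-- The variable vertices of an interface graph. -/
def interfaceVars {S : Type} {ar : S → ℕ} {X : Type} (t : Term S ar X) :
    Set (interfaceG t).V := Set.range Sum.inl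
/-- A PBPO⁺ rewrite rule. -/
structure PBPORule (W : Type) [Preorder W] : Type 1 where
  L : LGraph W
  K : LGraph W
  R : LGraph W
  L' : LGraph W
  K' : LGraph W
  l : K ⟶ L
  r : K ⟶ R
  l' : K' ⟶ L'
  tL : L ⟶ L'
  tK : K ⟶ K'

/-- A PBPO⁺ rewrite step `G_L ⇒_ρ^α G_R`, consisting of a monic match `m`, an
adherence morphism `α` making the match square a pullback, the pullback `G_K`
of `α` along `l'`, and the pushout `G_R` of `r` along `u`. -/
structure RewriteStep {W : Type} [Preorder W] (ρ : PBPORule W) (G₀ G₁ : LGraph W) :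
    Type 1 where
  m : ρ.L ⟶ G₀
  mono_m : Mono m
  α : G₀ ⟶ ρ.L'
  matchPB : IsPullback (𝟙 ρ.L) m ρ.tL α
  GK : LGraph W
  gL : GK ⟶ G₀
  u' : GK ⟶ ρ.K'
  pbK : IsPullback gL u' α ρ.l'
  u : ρ.K ⟶ GK
  u_u' : u ≫ u' = ρ.tK
  u_gL : u ≫ gL = ρ.l ≫ m
  w : ρ.R ⟶ G₁
  gR : GK ⟶ G₁
  po : IsPushout ρ.r u w gR

/-- `G ⇒_ρ H` : there exists a PBPO⁺ rewrite step from `G` to `H` via `ρ`. -/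
def PBPOStep {W : Type} [Preorder W] (ρ : PBPORule W) (G H : LGraph W) : Prop :=
  Nonempty (RewriteStep ρ G H)

/-- A match `m` establishes a match (of the rule `ρ`) if it is monic and some
adherence morphism makes the match square a pullback. -/
def EstablishesMatch {W : Type} [Preorder W] (ρ : PBPORule W) {G : LGraph W}
    (m : ρ.L ⟶ G) : Prop :=
  Mono m ∧ ∃ α : G ⟶ ρ.L', m ≫ α = ρ.tL ∧ IsPullback (𝟙 ρ.L) m ρ.tL α

section RuleEnc

variable {S : Type} {ar : S → ℕ} {X : Type}

/-- The morphism `l : K → L` of the rule encoding. -/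
noncomputable def encKtoL (ρ : TRSRule S ar X) : GLHom (interfaceG ρ.rhs) ρ.lhs.enc where
  onV v := match v with
    | .inl x => Sum.inr ⟨x.1, ρ.var_cond x.2⟩
    | .inr _ => ρ.lhs.encRoot
  onE e := e.elim
  src_comm e := e.elim
  tgt_comm e := e.elim
  lV_le v := by cases v <;> exact Flat.bot_le _
  lE_le e := e.elim

/-- The morphism `r : K → R` of the rule encoding. -/
noncomputable def encKtoR (ρ : TRSRule S ar X) : GLHom (interfaceG ρ.rhs) ρ.rhs.enc where
  onV v := match v with
    | .inl x => Sum.inr x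
    | .inr _ => ρ.rhs.encRoot
  onE e := e.elim
  src_comm e := e.elim
  tgt_comm e := e.elim
  lV_le v := by cases v <;> exact Flat.bot_le _
  lE_le e := e.elim

/-- Mapping the primed (lower-closure) vertices of `K'` to those of `L'`. -/
noncomputable def mapPrime (ρ : TRSRule S ar X) :
    ↥(interfaceVars ρ.rhs) → ↥(ρ.lhs.varHeads) :=
  fun x' => match x' with
  | ⟨.inl x, _⟩ => ⟨Sum.inr ⟨x.1, ρ.var_cond x.2⟩, ⟨⟨x.1, ρ.var_cond x.2⟩, rfl⟩⟩
  | ⟨.inr u, h⟩ => absurd h (by rintro ⟨y, hy⟩; cases hy)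

/-- The morphism `l' : K' → L'` of the rule encoding. -/
noncomputable def encl' (ρ : TRSRule S ar X) :
    GLHom (ctxCC (interfaceG ρ.rhs) (Sum.inr ()) (interfaceVars ρ.rhs))
      (ctxCC ρ.lhs.enc ρ.lhs.encRoot ρ.lhs.varHeads) where
  onV v := match v with
    | .inl (.inl (.inl x)) => .inl (.inl (Sum.inr ⟨x.1, ρ.var_cond x.2⟩))
    | .inl (.inl (.inr _)) => .inl (.inl ρ.lhs.encRoot)
    | .inl (.inr x') => .inl (.inr (mapPrime ρ x'))
    | .inr u => .inr u
  onE e := match e with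
    | .inl (.inl e) => e.elim
    | .inl (.inr (.inl x')) => .inl (.inr (.inl (mapPrime ρ x')))
    | .inl (.inr (.inr x')) => .inl (.inr (.inr (mapPrime ρ x')))
    | .inr b => .inr b
  src_comm := by
    rintro ((e | (⟨(x | u), hv⟩ | ⟨(x | u), hv⟩)) | b)
    · exact e.elim
    · rfl
    · exact absurd hv (by rintro ⟨y, hy⟩; cases hy)
    · rfl
    · exact absurd hv (by rintro ⟨y, hy⟩; cases hy)
    · rfl
  tgt_comm := by
    rintro ((e | (x' | x')) | b)
    · exact e.elim
    · rfl
    · rfl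
    · cases b <;> rfl
  lV_le := by
    rintro (((x | u) | x') | c)
    · refine Flat.le_cases (Or.inr ?_)
      exact (ctxCC_lV_inl ρ.lhs.enc ρ.lhs.encRoot ρ.lhs.varHeads
        (Sum.inr ⟨x.1, ρ.var_cond x.2⟩)).trans (if_pos ⟨⟨x.1, ρ.var_cond x.2⟩, rfl⟩)
    · refine Flat.le_cases (Or.inl ?_)
      exact (ctxCC_lV_inl (interfaceG ρ.rhs) (Sum.inr ()) (interfaceVars ρ.rhs)
        (Sum.inr u)).trans ((if_neg (by rintro ⟨y, hy⟩; cases hy)).trans rfl)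
    · exact Flat.le_cases (Or.inr rfl)
    · exact Flat.le_cases (Or.inr rfl)
  lE_le := by
    rintro ((e | (x' | x')) | b)
    · exact e.elim
    · exact Flat.le_cases (Or.inr rfl)
    · exact Flat.le_cases (Or.inr rfl)
    · exact Flat.le_cases (Or.inr rfl)

/-- The rule encoding `ρ°` of a term rewrite rule `ρ : l → r` as a PBPO⁺ rule. -/
noncomputable def ruleEnc (ρ : TRSRule S ar X) : PBPORule (FlatL S) where
  L := ρ.lhs.enc
  K := interfaceG ρ.rhs
  R := ρ.rhs.enc
  L' := ctxCC ρ.lhs.enc ρ.lhs.encRoot ρ.lhs.varHeads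
  K' := ctxCC (interfaceG ρ.rhs) (Sum.inr ()) (interfaceVars ρ.rhs)
  l := encKtoL ρ
  r := encKtoR ρ
  l' := encl' ρ
  tL := tCC ρ.lhs.enc ρ.lhs.encRoot ρ.lhs.varHeads
  tK := tCC (interfaceG ρ.rhs) (Sum.inr ()) (interfaceVars ρ.rhs)

/-- The rewrite relation of an encoded term rewriting system `R°`. -/
def SysStep (Rs : Set (TRSRule S ar X)) (G H : LGraph (FlatL S)) : Prop :=
  ∃ ρ ∈ Rs, PBPOStep (ruleEnc ρ) G H

end RuleEnc
section Cycles

variable {W : Type}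

/-- `IsUPath G u es v`: `es` is an undirected path from `u` to `v` in `G`. -/
def IsUPath (G : LGraph W) : G.V → List G.E → G.V → Prop
  | u, [], v => u = v
  | u, e :: es, v =>
      (G.src e = u ∧ IsUPath G (G.tgt e) es v) ∨ (G.tgt e = u ∧ IsUPath G (G.src e) es v)

/-- An undirected cycle at `v`: a nonempty undirected path from `v` to `v`
with pairwise distinct edges. -/
def IsUCycle (G : LGraph W) (v : G.V) (es : List G.E) : Prop :=
  es ≠ [] ∧ es.Nodup ∧ IsUPath G v es v

/-- A cycle edge is an edge lying on some undirected cycle. -/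
def CycleEdge (G : LGraph W) (e : G.E) : Prop :=
  ∃ v es, IsUCycle G v es ∧ e ∈ es

/-- A graph is cycle-free if it contains no undirected cycle. -/
def CycleFree (G : LGraph W) : Prop := ¬ ∃ v es, IsUCycle G v es

/-- `[G]`: the graph obtained from `G` by deleting all cycle edges. -/
def dropCycles (G : LGraph W) : LGraph W where
  V := G.V
  E := {e : G.E // ¬ CycleEdge G e}
  src e := G.src e.1
  tgt e := G.tgt e.1
  lV := G.lV
  lE e := G.lE e.1

end Cycles

section Zones

variable {S : Type}

/-- A vertex is in-well-formed if it has at most one incoming edge. -/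
def InWF (G : LGraph (FlatL S)) (v : G.V) : Prop :=
  ∀ e e' : G.E, G.tgt e = v → G.tgt e' = v → e = e'

/-- A vertex is out-well-formed if its label is a function symbol `f` and it
has exactly `ar f` outgoing edges, labeled `1, …, ar f`. -/
def OutWF (G : LGraph (FlatL S)) (ar : S → ℕ) (v : G.V) : Prop :=
  ∃ f : S, G.lV v = Flat.el (Sum.inl f) ∧
    ∃ φ : Fin (ar f) ≃ {e : G.E // G.src e = v},
      ∀ i, G.lE (φ i).1 = Flat.el (Sum.inr ⟨(i : ℕ) + 1, Nat.succ_pos _⟩)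

/-- A vertex is good if it is out-well-formed and all its children are
in-well-formed; otherwise it is bad. -/
def Good (G : LGraph (FlatL S)) (ar : S → ℕ) (v : G.V) : Prop :=
  OutWF G ar v ∧ ∀ e : G.E, G.src e = v → InWF G (G.tgt e)

/-- The edges included in a zone by the zoning algorithm are exactly the edges
with a good source. -/
def ZoneEdge (G : LGraph (FlatL S)) (ar : S → ℕ) (e : G.E) : Prop :=
  Good G ar (G.src e)

/-- One directed step along an edge included in a zone. -/
def ZStep (G : LGraph (FlatL S)) (ar : S → ℕ) (u v : G.V) : Prop :=
  ∃ e, ZoneEdge G ar e ∧ G.src e = u ∧ G.tgt e = v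

/-- Two vertices lie in the same zone iff they are connected by edges included
in zones (equivalence closure of `ZStep`). -/
def SameZone (G : LGraph (FlatL S)) (ar : S → ℕ) : G.V → G.V → Prop :=
  Relation.EqvGen (ZStep G ar)

/-- A root of a zone: a vertex with no parent inside its zone. -/
def IsZoneRoot (G : LGraph (FlatL S)) (ar : S → ℕ) (r : G.V) : Prop :=
  ¬ ∃ e, ZoneEdge G ar e ∧ G.tgt e = r

/-- A directed path along zone edges. -/
def IsZPath (G : LGraph (FlatL S)) (ar : S → ℕ) : G.V → List G.E → G.V → Prop
  | u, [], v => u = v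
  | u, e :: es, v => ZoneEdge G ar e ∧ G.src e = u ∧ IsZPath G ar (G.tgt e) es v

/-- The zone of `v₀`, as a subgraph of `G`, with every bad vertex relabeled
with `⊥`. -/
noncomputable def zoneTermGraph (G : LGraph (FlatL S)) (ar : S → ℕ) (v₀ : G.V) :
    LGraph (FlatL S) where
  V := {u : G.V // SameZone G ar u v₀}
  E := {e : G.E // ZoneEdge G ar e ∧ SameZone G ar (G.src e) v₀}
  src e := ⟨G.src e.1, e.2.2⟩
  tgt e := ⟨G.tgt e.1,
    Relation.EqvGen.trans _ _ _
      (Relation.EqvGen.symm _ _ (Relation.EqvGen.rel _ _ ⟨e.1, e.2.1, rfl, rfl⟩)) e.2.2⟩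
  lV u := if Good G ar u.1 then G.lV u.1 else Flat.bot
  lE e := G.lE e.1

end Zones

section Relabel

variable {W : Type}

/-- `G` with the label of vertex `v` changed to `l`. -/
noncomputable def relabelV (G : LGraph W) (v : G.V) (l : W) : LGraph W :=
  { G with lV := Function.update G.lV v l }

/-- `G` with the label of every vertex in `s` changed to `l`. -/
noncomputable def relabelSet (G : LGraph W) (s : Set G.V) (l : W) : LGraph W :=
  { G with lV := fun u => if u ∈ s then l else G.lV u }

end Relabel

/-! Since the match square is a pullback, `α ∘ m` is the inclusion `l° ↣ C[l°↓X]`, and every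
edge of `G` that `α` sends to an edge of `l°` is the `m`-image of that edge. In the context
closure the edges leaving a vertex other than a variable head, and the edges entering a
vertex other than the root, all come from `l°`; so around `m v` the graph `G` looks exactly like
`l°` around `v`, labels included (they are squeezed between the labels in `l°` and in `C[l°↓X]`,
which agree off the variable heads). In the encoding of a linear term every symbol vertex is good
and the root has no incoming edge, so `m v` is good. -/

theorem Flat.le_antisymm {A : Type} {a b : Flat A} (h : a ≤ b) (h' : b ≤ a) : a = b := by
  change Flat.le a b at h
  change Flat.le b a at h'
  cases a <;> cases b <;> simp_all [Flat.le]

instance (A : Type) : OrderBot (Flat A) where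
  bot := Flat.bot
  bot_le := Flat.bot_le

section Arrow

variable {W : Type} [Preorder W] [OrderBot W]

/-- Morphisms out of this graph are the edges of their target. -/
def arrowGraph (W : Type) [Bot W] : LGraph W where
  V := Bool
  E := Unit
  src _ := false
  tgt _ := true
  lV _ := ⊥
  lE _ := ⊥

def arrowGraph.hom (G : LGraph W) (e : G.E) : arrowGraph W ⟶ G where
  onV b := cond (b : Bool) (G.tgt e) (G.src e)
  onE _ := e
  src_comm _ := rfl
  tgt_comm _ := rfl
  lV_le _ := bot_le
  lE_le _ := bot_le

theorem arrowGraph.hom_comp {G H : LGraph W} (e : G.E) (f : G ⟶ H) :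
    arrowGraph.hom G e ≫ f = arrowGraph.hom H (f.onE e) := by
  refine GLHom.ext' (funext fun b => ?_) (funext fun _ => rfl)
  cases b
  · exact (f.src_comm e).symm
  · exact (f.tgt_comm e).symm

theorem onE_eq_of_isPullback {L L' G : LGraph W} {m : L ⟶ G} {tL : L ⟶ L'} {α : G ⟶ L'}
    (pb : IsPullback (𝟙 L) m tL α) {e : G.E} {d : L.E} (h : α.onE e = tL.onE d) :
    m.onE d = e := by
  have hsq : arrowGraph.hom L d ≫ tL = arrowGraph.hom G e ≫ α := by
    rw [arrowGraph.hom_comp, arrowGraph.hom_comp, h]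
  have hm := pb.lift_snd _ _ hsq
  rw [← Category.comp_id (pb.lift _ _ hsq), pb.lift_fst, arrowGraph.hom_comp] at hm
  exact congrArg (fun f : arrowGraph W ⟶ G => f.onE ()) hm

end Arrow

section ContextClosure

variable {A : Type} {L : LGraph (Flat A)} {r : L.V} {Xs : Set L.V}

theorem ctxCC_exists_of_src_eq {v : L.V} (hv : v ∉ Xs) {e : (ctxCC L r Xs).E}
    (he : (ctxCC L r Xs).src e = .inl (.inl v)) :
    ∃ d, L.src d = v ∧ e = .inl (.inl d) := by
  rcases e with (d | x | x) | b
  · exact ⟨d, by simpa [ctxCC, upperCC, lowerCC] using he, rfl⟩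
  · obtain rfl : x.1 = v := by simpa [ctxCC, upperCC, lowerCC] using he
    exact absurd x.2 hv
  · simp [ctxCC, upperCC, lowerCC] at he
  · simp [ctxCC, upperCC] at he

theorem ctxCC_exists_of_tgt_eq {v : L.V} (hv : v ≠ r) {e : (ctxCC L r Xs).E}
    (he : (ctxCC L r Xs).tgt e = .inl (.inl v)) :
    ∃ d, L.tgt d = v ∧ e = .inl (.inl d) := by
  rcases e with (d | x | x) | (_ | _)
  · exact ⟨d, by simpa [ctxCC, upperCC, lowerCC] using he, rfl⟩
  · simp [ctxCC, upperCC, lowerCC] at he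
  · simp [ctxCC, upperCC, lowerCC] at he
  · simp [ctxCC, upperCC] at he
  · exact absurd (Sum.inl.inj (Sum.inl.inj he)).symm hv

end ContextClosure

section Match

variable {A : Type} {L G : LGraph (Flat A)} {r : L.V} {Xs : Set L.V} {m : L ⟶ G}
  {α : G ⟶ ctxCC L r Xs}

theorem onV_onV_of_isPullback (pb : IsPullback (𝟙 L) m (tCC L r Xs) α) (v : L.V) :
    α.onV (m.onV v) = .inl (.inl v) := by
  have hw : m ≫ α = tCC L r Xs := by simpa using pb.w.symm
  exact congrFun (congrArg GLHom.onV hw) v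

theorem onE_onE_of_isPullback (pb : IsPullback (𝟙 L) m (tCC L r Xs) α) (d : L.E) :
    α.onE (m.onE d) = .inl (.inl d) := by
  have hw : m ≫ α = tCC L r Xs := by simpa using pb.w.symm
  exact congrFun (congrArg GLHom.onE hw) d

theorem onE_injective_of_isPullback (pb : IsPullback (𝟙 L) m (tCC L r Xs) α) :
    Function.Injective m.onE := fun d d' h => by
  have h' := congrArg α.onE h
  rw [onE_onE_of_isPullback pb, onE_onE_of_isPullback pb] at h'
  exact Sum.inl.inj (Sum.inl.inj h')

theorem exists_onE_eq_of_src_eq (pb : IsPullback (𝟙 L) m (tCC L r Xs) α) {v : L.V}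
    (hv : v ∉ Xs) {e : G.E} (he : G.src e = m.onV v) : ∃ d, L.src d = v ∧ m.onE d = e := by
  have hsrc : (ctxCC L r Xs).src (α.onE e) = .inl (.inl v) := by
    rw [α.src_comm, he, onV_onV_of_isPullback pb]
  obtain ⟨d, hd, hαe⟩ := ctxCC_exists_of_src_eq hv hsrc
  exact ⟨d, hd, onE_eq_of_isPullback pb hαe⟩

theorem exists_onE_eq_of_tgt_eq (pb : IsPullback (𝟙 L) m (tCC L r Xs) α) {v : L.V}
    (hv : v ≠ r) {e : G.E} (he : G.tgt e = m.onV v) : ∃ d, L.tgt d = v ∧ m.onE d = e := by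
  have htgt : (ctxCC L r Xs).tgt (α.onE e) = .inl (.inl v) := by
    rw [α.tgt_comm, he, onV_onV_of_isPullback pb]
  obtain ⟨d, hd, hαe⟩ := ctxCC_exists_of_tgt_eq hv htgt
  exact ⟨d, hd, onE_eq_of_isPullback pb hαe⟩

theorem lV_onV_of_isPullback (pb : IsPullback (𝟙 L) m (tCC L r Xs) α) {v : L.V}
    (hv : v ∉ Xs) : G.lV (m.onV v) = L.lV v := by
  refine Flat.le_antisymm ?_ (m.lV_le v)
  have h := α.lV_le (m.onV v)
  rwa [onV_onV_of_isPullback pb, ctxCC_lV_inl, if_neg hv] at h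

theorem lE_onE_of_isPullback (pb : IsPullback (𝟙 L) m (tCC L r Xs) α) (d : L.E) :
    G.lE (m.onE d) = L.lE d := by
  refine Flat.le_antisymm ?_ (m.lE_le d)
  have h := α.lE_le (m.onE d)
  rwa [onE_onE_of_isPullback pb] at h

end Match

section GoodTransfer

variable {S : Type} {ar : S → ℕ} {L G : LGraph (FlatL S)} {r : L.V} {Xs : Set L.V}
  {m : L ⟶ G} {α : G ⟶ ctxCC L r Xs}

theorem inWF_onV_of_isPullback (pb : IsPullback (𝟙 L) m (tCC L r Xs) α) {v : L.V}
    (hv : v ≠ r) (h : InWF L v) : InWF G (m.onV v) := by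
  intro e e' he he'
  obtain ⟨d, hd, rfl⟩ := exists_onE_eq_of_tgt_eq pb hv he
  obtain ⟨d', hd', rfl⟩ := exists_onE_eq_of_tgt_eq pb hv he'
  rw [h d d' hd hd']

def outEdgesEquivOfIsPullback (pb : IsPullback (𝟙 L) m (tCC L r Xs) α) {v : L.V}
    (hv : v ∉ Xs) : {d : L.E // L.src d = v} ≃ {e : G.E // G.src e = m.onV v} :=
  Equiv.ofBijective (fun d => ⟨m.onE d.1, by rw [m.src_comm, d.2]⟩)
    ⟨fun d d' h => Subtype.ext (onE_injective_of_isPullback pb (congrArg Subtype.val h)),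
     fun e => by
      obtain ⟨d, hd, hde⟩ := exists_onE_eq_of_src_eq pb hv e.2
      exact ⟨⟨d, hd⟩, Subtype.ext hde⟩⟩

theorem outWF_onV_of_isPullback (pb : IsPullback (𝟙 L) m (tCC L r Xs) α) {v : L.V}
    (hv : v ∉ Xs) (h : OutWF L ar v) : OutWF G ar (m.onV v) := by
  obtain ⟨f, hf, φ, hφ⟩ := h
  refine ⟨f, (lV_onV_of_isPullback pb hv).trans hf,
    φ.trans (outEdgesEquivOfIsPullback pb hv), fun i => ?_⟩
  exact (lE_onE_of_isPullback pb _).trans (hφ i)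

theorem good_onV_of_isPullback (pb : IsPullback (𝟙 L) m (tCC L r Xs) α) {v : L.V}
    (hv : v ∉ Xs) (hr : ∀ d, L.tgt d ≠ r) (h : Good L ar v) : Good G ar (m.onV v) := by
  refine ⟨outWF_onV_of_isPullback pb hv h.1, fun e he => ?_⟩
  obtain ⟨d, hd, rfl⟩ := exists_onE_eq_of_src_eq pb hv he
  rw [m.tgt_comm]
  exact inWF_onV_of_isPullback pb (hr d) (h.2 d hd)

end GoodTransfer

namespace Term

variable {S : Type} {ar : S → ℕ} {X : Type} {t : Term S ar X}

theorem encTgt_injective (hlin : t.Linear) : Function.Injective t.encTgt := by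
  intro d d' h
  unfold encTgt encV at h
  split at h <;> split at h
  · obtain ⟨h1, h2⟩ : d.1.1 = d'.1.1 ∧ d.1.2 = d'.1.2 := by simpa using h
    exact Subtype.ext (Prod.ext h1 h2)
  · exact absurd h Sum.inl_ne_inr
  · exact absurd h Sum.inr_ne_inl
  · rename_i hn hn'
    have hd := Classical.choose_spec (t.edge_tgt_var d.2 hn)
    rw [Subtype.mk.inj (Sum.inr.inj h)] at hd
    obtain ⟨h1, h2⟩ : d.1.1 = d'.1.1 ∧ d.1.2 = d'.1.2 := by
      simpa using hlin _ _ _ hd (Classical.choose_spec (t.edge_tgt_var d'.2 hn'))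
    exact Subtype.ext (Prod.ext h1 h2)

theorem inWF_enc (hlin : t.Linear) (v : t.enc.V) : InWF t.enc v :=
  fun _ _ hd hd' => encTgt_injective hlin (hd.trans hd'.symm)

theorem encTgt_ne_encRoot (h : (t.symAt []).isSome) (d : t.encE) : t.encTgt d ≠ t.encRoot := by
  unfold encTgt encRoot encV
  rw [dif_pos h]
  split
  · simp
  · exact Sum.inr_ne_inl

theorem outWF_enc (q : {p : List ℕ // (t.symAt p).isSome}) : OutWF t.enc ar (Sum.inl q) := by
  obtain ⟨f, hf⟩ := Option.isSome_iff_exists.mp q.2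
  refine ⟨f, by simp [enc, hf], Equiv.ofBijective
    (fun i => ⟨⟨(q.1, i), f, hf, i.2⟩, rfl⟩) ⟨fun i j hij => ?_, fun d => ?_⟩, fun _ => rfl⟩
  · exact Fin.ext (congrArg (fun d : {d : t.encE // _} => d.1.1.2) hij)
  · obtain ⟨⟨⟨p, i⟩, f', hf', hi⟩, hd⟩ := d
    obtain rfl : p = q.1 := congrArg Subtype.val (Sum.inl.inj hd)
    obtain rfl : f' = f := Option.some.inj (hf'.symm.trans hf)
    exact ⟨⟨i, hi⟩, rfl⟩

theorem good_enc (hlin : t.Linear) (q : {p : List ℕ // (t.symAt p).isSome}) :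
    Good t.enc ar (Sum.inl q) :=
  ⟨outWF_enc q, fun _ _ => inWF_enc hlin _⟩

end Term

theorem TRSRule.lhs_symAt_nil_isSome {S : Type} {ar : S → ℕ} {X : Type} (ρ : TRSRule S ar X) :
    (ρ.lhs.symAt []).isSome := by
  rcases hl : ρ.lhs with x | ⟨f, ts⟩
  · exact absurd hl (ρ.lhs_not_var x)
  · simp [Term.symAt, Term.sub?, Term.head?]

theorem statement_16_general {S : Type} {ar : S → ℕ} {X : Type}
    (ρ : TRSRule S ar X) (hρ : ρ.Linear) (G H : LGraph (FlatL S))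
    (st : RewriteStep (ruleEnc ρ) G H)
    (q : {p : List ℕ // (ρ.lhs.symAt p).isSome}) :
    Good G ar (homV st.m (Sum.inl q)) :=
  good_onV_of_isPullback st.matchPB (by rintro ⟨_, ⟨⟩⟩)
    (Term.encTgt_ne_encRoot ρ.lhs_symAt_nil_isSome) (Term.good_enc hρ.1 q)

/-- A match morphism `m : l° ↣ G` establishing a PBPO⁺ rewrite
step via the rule encoding `ρ°` of a linear term rewrite rule `ρ = l → r` on a
finite `Σ°`-labeled graph `G` maps every symbol vertex of `l°` to a good
vertex of `G`. -/
theorem statement_16 {S : Type} {ar : S → ℕ} {X : Type}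
    (ρ : TRSRule S ar X) (hρ : ρ.Linear) (G H : LGraph (FlatL S))
    (hfin : FiniteG G) (st : RewriteStep (ruleEnc ρ) G H)
    (q : {p : List ℕ // (ρ.lhs.symAt p).isSome}) :
    Good G ar (homV st.m (Sum.inl q)) :=
  statement_16_general ρ hρ G H st q
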